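/- The instance reducibility doctrine iR has a generic element: for the partitioned assembly Ω := (𝒫𝒫(A)^A, constant k) with the predicate given by the projections (π₁, π₃) from {(Φ, a, A₀) : Φ ∈ 𝒫𝒫(A)^A, a ∈ A, A₀ ∈ Φ(a)} (realized by π₂), every element (f,α) of any fibre iR(X,φ) equals the reindexing of this predicate along the classifying morphism x ↦ (a ↦ {α(y) : y ∈ f⁻¹(x), ψ(y) = a}). -/
import Mathlib


/-- A partial combinatory algebra: a set with a partial binary application
and combinators `k`, `s` satisfying the usual axioms. -/
structure PCA where
  A : Type
  app : A → A → Part A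
  k : A
  s : A
  k_spec : ∀ a b : A, (app k a).bind (fun x => app x b) = Part.some a
  s_total : ∀ a b : A, ((app s a).bind (fun x => app x b)).Dom
  s_spec : ∀ a b c : A,
    (((app s a).bind (fun x => app x b)).bind (fun x => app x c)) =
      (app a c).bind (fun x => (app b c).bind (fun y => app x y))

namespace PCA

/-- Application extended to partial elements (Kleene application). -/
def papp (P : PCA) (x y : Part P.A) : Part P.A :=
  x.bind fun a => y.bind fun b => P.app a b

end PCA
/-- An elementary sub-PCA: a subset containing suitable combinators `k`, `s`
(working for the whole PCA) and closed under application. -/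
structure SubPCA (P : PCA) where
  mem : P.A → Prop
  k' : P.A
  s' : P.A
  k'_mem : mem k'
  s'_mem : mem s'
  k'_spec : ∀ a b : P.A, P.papp (P.app k' a) (Part.some b) = Part.some a
  s'_total : ∀ a b : P.A, (P.papp (P.app s' a) (Part.some b)).Dom
  s'_spec : ∀ a b c : P.A,
    P.papp (P.papp (P.app s' a) (Part.some b)) (Part.some c) =
      P.papp (P.app a c) (P.app b c)
  closed : ∀ a b c : P.A, mem a → mem b → P.app a b = Part.some c → mem c
/-- Pairing and projection combinators, lying in the sub-PCA, together with the
induced total coding function `code a b = ⟨a,b⟩`. -/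
structure Pairing (P : PCA) (S : SubPCA P) where
  pair : P.A
  p1 : P.A
  p2 : P.A
  pair_mem : S.mem pair
  p1_mem : S.mem p1
  p2_mem : S.mem p2
  code : P.A → P.A → P.A
  code_spec : ∀ a b : P.A, P.papp (P.app pair a) (Part.some b) = Part.some (code a b)
  p1_spec : ∀ a b : P.A, P.app p1 (code a b) = Part.some a
  p2_spec : ∀ a b : P.A, P.app p2 (code a b) = Part.some b

/-- An element of the fibre `iR(X,φ)` of the instance reducibility doctrine:
a partitioned assembly `(Y,ψ)`, an `A'`-realized map `f : (Y,ψ) → (X,φ)` of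
partitioned assemblies, and a predicate `α : Y → 𝒫(A)`. -/
structure IRObj (P : PCA) (S : SubPCA P) (X : Type) (φ : X → P.A) where
  Y : Type
  ψ : Y → P.A
  f : Y → X
  hf : ∃ r : P.A, S.mem r ∧ ∀ y : Y, P.app r (ψ y) = Part.some (φ (f y))
  α : Y → Set P.A

/-- The order on the fibre `iR(X,φ)`: `(f,α) ≤ (g,β)` iff there is a morphism
`h` of partitioned assemblies with `g ∘ h = f` and some `ℓ ∈ A'` with
`ℓ·⟨ψ(y),q⟩ ∈ α(y)` for all `y` and all `q ∈ β(h(y))`. -/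
def IRle (P : PCA) (S : SubPCA P) (Q : Pairing P S) {X : Type} {φ : X → P.A}
    (u v : IRObj P S X φ) : Prop :=
  ∃ h : u.Y → v.Y,
    (∃ r : P.A, S.mem r ∧ ∀ y : u.Y, P.app r (u.ψ y) = Part.some (v.ψ (h y))) ∧
    (∀ y : u.Y, v.f (h y) = u.f y) ∧
    ∃ l : P.A, S.mem l ∧
      ∀ y : u.Y, ∀ q ∈ v.α (h y), ∃ c ∈ u.α y, P.app l (Q.code (u.ψ y) q) = Part.some c

/-- The reindexing, along a map `m : X → 𝒫𝒫(A)^A`, of the generic predicate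
`(π₁,π₃)` over `Ω := (𝒫𝒫(A)^A, constant realizer)`, with domain
`{(x,a,A₀) : A₀ ∈ m(x)(a)}`, realizer `⟨φ(x),a⟩`, and predicate `A₀`. -/
def genReindex (P : PCA) (S : SubPCA P) (Q : Pairing P S)
    {X : Type} (φ : X → P.A)
    (m : X → (P.A → Set (Set P.A))) : IRObj P S X φ where
  Y := Σ x : X, Σ a : P.A, {A0 : Set P.A // A0 ∈ m x a}
  ψ := fun p => Q.code (φ p.1) p.2.1
  f := fun p => p.1
  hf := ⟨Q.p1, Q.p1_mem, fun p => Q.p1_spec _ _⟩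
  α := fun p => p.2.2.val

/-- The classifying morphism of an element `(f,α)` of `iR(X,φ)`:
`x ↦ (a ↦ {α(y) : y ∈ f⁻¹(x), ψ(y) = a})`. -/
def classifying (P : PCA) (S : SubPCA P) {X : Type} {φ : X → P.A}
    (u : IRObj P S X φ) : X → (P.A → Set (Set P.A)) :=
  fun x a => {A0 | ∃ y : u.Y, u.f y = x ∧ u.ψ y = a ∧ u.α y = A0}

lemma papp_some_some (P : PCA) (a b : P.A) :
    P.papp (Part.some a) (Part.some b) = P.app a b := by
  simp [PCA.papp]

lemma papp_eq_some (P : PCA) {x : Part P.A} {b c : P.A}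
    (h : P.papp x (Part.some b) = Part.some c) :
    ∃ a, x = Part.some a ∧ P.app a b = Part.some c := by
  simp only [PCA.papp, Part.bind_some_eq_map] at h
  rw [Part.eq_some_iff] at h
  simp only [Part.mem_bind_iff] at h
  obtain ⟨a, ha, b', hb', hc⟩ := h
  rw [Part.mem_some_iff] at hb'
  subst hb'
  exact ⟨a, Part.eq_some_iff.mpr ha, Part.eq_some_iff.mpr hc⟩

lemma sMk (P : PCA) (S : SubPCA P) (a b : P.A) :
    ∃ e, (∀ c, P.app e c = P.papp (P.app a c) (P.app b c)) ∧
      (S.mem a → S.mem b → S.mem e) := by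
  have hd := S.s'_total a b
  obtain ⟨e, he⟩ := Part.dom_iff_mem.mp hd
  have he' : P.papp (P.app S.s' a) (Part.some b) = Part.some e :=
    Part.eq_some_iff.mpr he
  obtain ⟨t, ht, hte⟩ := papp_eq_some P he'
  refine ⟨e, fun c => ?_,
    fun ha hb => S.closed t b e (S.closed _ _ _ S.s'_mem ha ht) hb hte⟩
  have := S.s'_spec a b c
  rw [he', papp_some_some] at this
  exact this

/-- The instance reducibility doctrine has a generic element: the classifying
map is a morphism of partitioned assemblies into `Ω = (𝒫𝒫(A)^A, constant
realizer)`, and every `(f,α)` in `iR(X,φ)` is equal (equivalent in both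
directions of the instance-reducibility order) to the reindexing of the
generic predicate along its classifying morphism. -/
theorem iR_generic_element (P : PCA) (S : SubPCA P) (Q : Pairing P S)
    (X : Type) (φ : X → P.A) (u : IRObj P S X φ) :
    (∃ r : P.A, S.mem r ∧ ∀ x : X, P.app r (φ x) = Part.some S.k') ∧
    IRle P S Q u (genReindex P S Q φ (classifying P S u)) ∧
    IRle P S Q (genReindex P S Q φ (classifying P S u)) u := by
  classical
  -- the constant-k' realizer on Ω
  obtain ⟨kk, hkk, -⟩ := papp_eq_some P (S.k'_spec S.k' S.k')
  have hkkmem : S.mem kk := S.closed _ _ _ S.k'_mem S.k'_mem hkk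
  have hkkval : ∀ x : X, P.app kk (φ x) = Part.some S.k' := by
    intro x
    have := S.k'_spec S.k' (φ x)
    rwa [hkk, papp_some_some] at this
  -- identity combinator
  obtain ⟨i, hi, himem⟩ := sMk P S S.k' S.k'
  have hival : ∀ c, P.app i c = Part.some c := by
    intro c
    obtain ⟨kc, hkc, hkc2⟩ := papp_eq_some P (S.k'_spec c c)
    have h2 : P.app kc kc = Part.some c := by
      have := S.k'_spec c kc
      rwa [hkc, papp_some_some] at this
    rw [hi c, hkc, papp_some_some, h2]
  -- realizer of u.f
  obtain ⟨rf, hrfmem, hrf⟩ := u.hf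
  -- kp : constant pair
  obtain ⟨kp, hkp, -⟩ := papp_eq_some P (S.k'_spec Q.pair Q.pair)
  have hkpmem : S.mem kp := S.closed _ _ _ S.k'_mem Q.pair_mem hkp
  have hkpval : ∀ c, P.app kp c = Part.some Q.pair := by
    intro c
    have := S.k'_spec Q.pair c
    rwa [hkp, papp_some_some] at this
  -- a1 : c ↦ pair (rf c)
  obtain ⟨a1, ha1, ha1mem⟩ := sMk P S kp rf
  -- r : c ↦ pair (rf c) c
  obtain ⟨r, hr, hrmem⟩ := sMk P S a1 i
  have hrval : ∀ y : u.Y,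
      P.app r (u.ψ y) = Part.some (Q.code (φ (u.f y)) (u.ψ y)) := by
    intro y
    rw [hr, hival, ha1, hkpval, hrf, papp_some_some]
    exact Q.code_spec _ _
  refine ⟨⟨kk, hkkmem, hkkval⟩, ?_, ?_⟩
  · refine ⟨fun y => ⟨u.f y, u.ψ y, ⟨u.α y, y, rfl, rfl, rfl⟩⟩,
      ⟨r, hrmem (ha1mem hkpmem hrfmem) (himem S.k'_mem S.k'_mem), fun y => hrval y⟩,
      fun y => rfl, Q.p2, Q.p2_mem, fun y q hq => ⟨q, hq, Q.p2_spec _ _⟩⟩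
  · refine ⟨fun p => p.2.2.prop.choose,
      ⟨Q.p2, Q.p2_mem, fun p => ?_⟩, fun p => p.2.2.prop.choose_spec.1,
      Q.p2, Q.p2_mem, fun p q hq => ?_⟩
    · show P.app Q.p2 (Q.code (φ p.1) p.2.1) = _
      rw [Q.p2_spec, p.2.2.prop.choose_spec.2.1]
    · refine ⟨q, ?_, ?_⟩
      · have := p.2.2.prop.choose_spec.2.2
        show q ∈ p.2.2.val
        rw [← this]; exact hq
      · show P.app Q.p2 (Q.code (Q.code (φ p.1) p.2.1) q) = _
        exact Q.p2_spec _ _
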